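/- Let M ≥ 1, let f : ℝ^M → ℝ be K_f-Lipschitz with K_f ≥ 0, take the reference vector x_r = 0, let g : ℝ^M → ℝ^d be an explanation encoder, let η : ℝ^d → ℝ^M be K_η-Lipschitz with K_η ≥ 0, and define the estimated explanation Φ̂(x) = η(g(x)). Let x_k ∈ ℝ^M be a testing instance and let x̃_k⁺ = m_{S̃}(x_k) be a perturbed instance of x_k for some subset S̃ ⊆ {1,…,M} satisfying min_{1≤i≤M} φ_i(x̃_k⁺) ≥ 0. Suppose the encoder is well-trained at x̃_k⁺, i.e. ‖Φ(x̃_k⁺) − Φ̂(x̃_k⁺)‖₂ ≤ ε for some ε ≥ 0. Then the explanation error at x_k is bounded as ‖Φ(x_k) − Φ̂(x_k)‖₂ ≤ (1 + √2·γ_k)·|f(x_k) − f(x̃_k⁺)| + √M·γ_k + ε + K_η·‖g(x̃_k⁺) − g(x_k)‖₂, where γ_k = K_f·‖x_k‖₂. -/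

import Mathlib

/-
Split `Φ(x_k) - η(g x_k)` at `Φ(x̃)` and `η(g x̃)`, where `x̃ = m_{S̃}(x_k)`. Only `Φ(x) - Φ(m_A x)`
needs work, and it is at most `√M K_f ‖x - x_r‖` for every mask `A`. Each `φ_i(y)` is an average of
marginal contributions of size at most `K_f |y_i - x_{r,i}|`; this bounds the coordinates `i ∉ A`
(where `φ_i(m_A x) = 0`) by `K_f |x_i - x_{r,i}|` and those `i ∈ A` by twice that. For `i ∈ A` the
difference is also an average of second differences, each at most `2 K_f` times the norm of
`x - x_r` on `S \ A`; since every feature lies in half of the coalitions, Jensen turns this into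
the bound `2 K_f² Q` on its square, `Q` being the squared norm of `x - x_r` outside `A`. Finally
`min (4 K_f² a_i, 2 K_f² Q) ≤ M K_f² a_i + K_f² Q` (as `M ≥ 2` once `∅ ≠ A ≠ univ`) and
`#A + 1 ≤ M` sum to `M K_f² ‖x - x_r‖²`.
-/

/-- The masked instance `m_S(x)`: coordinate `j` equals `x j` if `j ∈ S`
and the reference value `xr j` otherwise. -/
noncomputable def mask {M : ℕ} (xr : EuclideanSpace ℝ (Fin M)) (S : Finset (Fin M))
    (x : EuclideanSpace ℝ (Fin M)) : EuclideanSpace ℝ (Fin M) :=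
  WithLp.toLp 2 (fun j => if j ∈ S then x j else xr j)

/-- Attribution of feature `i` at `x`:
`φ_i(x) = 2^{-(M-1)} · Σ_{S ⊆ {1,…,M}\{i}} (f(m_{S∪{i}}(x)) − f(m_S(x)))`. -/
noncomputable def phi {M : ℕ} (xr : EuclideanSpace ℝ (Fin M))
    (f : EuclideanSpace ℝ (Fin M) → ℝ) (i : Fin M) (x : EuclideanSpace ℝ (Fin M)) : ℝ :=
  ((2 : ℝ) ^ (M - 1))⁻¹ *
    ∑ S ∈ (Finset.univ.erase i).powerset, (f (mask xr (insert i S) x) - f (mask xr S x))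

/-- The explanation vector `Φ(x) = (φ_1(x), …, φ_M(x))`. -/
noncomputable def Phi {M : ℕ} (xr : EuclideanSpace ℝ (Fin M))
    (f : EuclideanSpace ℝ (Fin M) → ℝ) (x : EuclideanSpace ℝ (Fin M)) :
    EuclideanSpace ℝ (Fin M) :=
  WithLp.toLp 2 (fun i => phi xr f i x)

open Finset
open scoped BigOperators

lemma expect_powerset_sum {α : Type*} [DecidableEq α] (E : Finset α) (w : α → ℝ) :
    𝔼 S ∈ E.powerset, ∑ l ∈ S, w l = (∑ l ∈ E, w l) / 2 := by
  have hcompl : ∑ S ∈ E.powerset, ∑ l ∈ E \ S, w l = ∑ S ∈ E.powerset, ∑ l ∈ S, w l :=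
    sum_nbij' (E \ ·) (E \ ·) (by simp) (by simp)
      (fun S hS => Finset.sdiff_sdiff_eq_self (mem_powerset.1 hS))
      (fun S hS => Finset.sdiff_sdiff_eq_self (mem_powerset.1 hS)) (fun _ _ => rfl)
  have htotal : ∑ S ∈ E.powerset, (∑ l ∈ E \ S, w l + ∑ l ∈ S, w l) =
      2 ^ E.card * ∑ l ∈ E, w l := by
    rw [sum_congr rfl fun S hS => sum_sdiff (mem_powerset.1 hS), sum_const, card_powerset,
      nsmul_eq_mul]
    push_cast
    ring
  rw [sum_add_distrib, hcompl] at htotal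
  rw [expect_eq_sum_div_card, card_powerset]
  push_cast
  field_simp
  linarith

section Masking

variable {M : ℕ} (xr : EuclideanSpace ℝ (Fin M))

@[simp]
lemma mask_apply (S : Finset (Fin M)) (x : EuclideanSpace ℝ (Fin M)) (j : Fin M) :
    mask xr S x j = if j ∈ S then x j else xr j := rfl

lemma mask_univ (x : EuclideanSpace ℝ (Fin M)) : mask xr univ x = x := by
  ext j
  simp

lemma mask_mask (A S : Finset (Fin M)) (x : EuclideanSpace ℝ (Fin M)) :
    mask xr S (mask xr A x) = mask xr (S ∩ A) x := by
  ext j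
  by_cases hS : j ∈ S <;> by_cases hA : j ∈ A <;> simp [hS, hA]

lemma mask_insert_eq_of_apply_eq {i : Fin M} {y : EuclideanSpace ℝ (Fin M)} (hy : y i = xr i)
    (S : Finset (Fin M)) : mask xr (insert i S) y = mask xr S y := by
  ext j
  by_cases hj : j = i
  · subst hj
    simp [hy]
  · simp [hj]

lemma mask_insert_sub_mask_insert_inter {i : Fin M} {A : Finset (Fin M)} (hi : i ∈ A)
    (S : Finset (Fin M)) (x : EuclideanSpace ℝ (Fin M)) :
    mask xr (insert i S) x - mask xr (insert i (S ∩ A)) x = mask xr S x - mask xr (S ∩ A) x := by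
  ext j
  by_cases hj : j = i
  · subst hj
    simp [hi]
  · simp [hj]

lemma norm_mask_sub_mask_sq {S T : Finset (Fin M)} (hTS : T ⊆ S) (x : EuclideanSpace ℝ (Fin M)) :
    ‖mask xr S x - mask xr T x‖ ^ 2 = ∑ j ∈ S \ T, (x j - xr j) ^ 2 := by
  rw [EuclideanSpace.real_norm_sq_eq, ← Fintype.sum_ite_mem (S \ T)]
  refine sum_congr rfl fun j _ => ?_
  by_cases hT : j ∈ T
  · simp [hT, hTS hT]
  · by_cases hS : j ∈ S <;> simp [hS, hT]

lemma norm_mask_insert_sub_mask {i : Fin M} {S : Finset (Fin M)} (hi : i ∉ S)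
    (x : EuclideanSpace ℝ (Fin M)) : ‖mask xr (insert i S) x - mask xr S x‖ = |x i - xr i| := by
  rw [← sq_eq_sq₀ (norm_nonneg _) (abs_nonneg _), sq_abs,
    norm_mask_sub_mask_sq xr (subset_insert i S), insert_sdiff_cancel hi, sum_singleton]

lemma expect_norm_mask_sub_mask_inter_sq_le (x : EuclideanSpace ℝ (Fin M))
    (E A : Finset (Fin M)) :
    𝔼 S ∈ E.powerset, ‖mask xr S x - mask xr (S ∩ A) x‖ ^ 2 ≤
      (∑ j ∈ Aᶜ, (x j - xr j) ^ 2) / 2 := by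
  simp_rw [norm_mask_sub_mask_sq xr inter_subset_left, sdiff_inter_self_left, sdiff_eq_filter,
    sum_filter]
  rw [expect_powerset_sum, ← sum_filter, ← sdiff_eq_filter]
  gcongr ?_ / 2
  exact sum_le_sum_of_subset_of_nonneg (sdiff_subset_sdiff (subset_univ E) subset_rfl)
    fun _ _ _ => sq_nonneg _

end Masking

section Attribution

variable {M : ℕ} (xr : EuclideanSpace ℝ (Fin M)) (f : EuclideanSpace ℝ (Fin M) → ℝ)

lemma phi_eq_expect (i : Fin M) (x : EuclideanSpace ℝ (Fin M)) :
    phi xr f i x =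
      𝔼 S ∈ (univ.erase i).powerset, (f (mask xr (insert i S) x) - f (mask xr S x)) := by
  rw [phi, expect_eq_sum_div_card, card_powerset, card_erase_of_mem (mem_univ i), card_univ,
    Fintype.card_fin, div_eq_inv_mul]
  push_cast
  rfl

lemma phi_eq_zero_of_apply_eq {i : Fin M} {y : EuclideanSpace ℝ (Fin M)} (hy : y i = xr i) :
    phi xr f i y = 0 := by
  simp [phi, mask_insert_eq_of_apply_eq xr hy]

variable {f} {Kf : ℝ} (hf : ∀ u v : EuclideanSpace ℝ (Fin M), |f u - f v| ≤ Kf * ‖u - v‖)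
include hf

lemma abs_phi_le (i : Fin M) (y : EuclideanSpace ℝ (Fin M)) :
    |phi xr f i y| ≤ Kf * |y i - xr i| := by
  rw [phi_eq_expect]
  refine (abs_expect_le _ _).trans (expect_le (powerset_nonempty _) fun S hS => ?_)
  have hi : i ∉ S := fun h => notMem_erase i univ (mem_powerset.1 hS h)
  exact (hf _ _).trans_eq (by rw [norm_mask_insert_sub_mask xr hi])

lemma abs_phi_sub_phi_mask_le {i : Fin M} {A : Finset (Fin M)} (hi : i ∈ A)
    (x : EuclideanSpace ℝ (Fin M)) :
    |phi xr f i x - phi xr f i (mask xr A x)| ≤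
      2 * Kf * 𝔼 S ∈ (univ.erase i).powerset, ‖mask xr S x - mask xr (S ∩ A) x‖ := by
  rw [phi_eq_expect, phi_eq_expect, ← expect_sub_distrib, mul_expect]
  refine (abs_expect_le _ _).trans (expect_le_expect fun S _ => ?_)
  have hins := hf (mask xr (insert i S) x) (mask xr (insert i (S ∩ A)) x)
  rw [mask_insert_sub_mask_insert_inter xr hi] at hins
  have hS := hf (mask xr S x) (mask xr (S ∩ A) x)
  rw [mask_mask, mask_mask, insert_inter_of_mem hi]
  calc _ = |(f (mask xr (insert i S) x) - f (mask xr (insert i (S ∩ A)) x)) -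
        (f (mask xr S x) - f (mask xr (S ∩ A) x))| := by
        congr 1
        ring
    _ ≤ _ := (abs_sub _ _).trans (by linarith)

lemma sq_phi_sub_phi_mask_le_of_notMem {i : Fin M} {A : Finset (Fin M)} (hi : i ∉ A)
    (x : EuclideanSpace ℝ (Fin M)) :
    (phi xr f i x - phi xr f i (mask xr A x)) ^ 2 ≤ Kf ^ 2 * (x i - xr i) ^ 2 := by
  have hmask : mask xr A x i = xr i := by simp [hi]
  rw [phi_eq_zero_of_apply_eq xr f hmask, sub_zero, ← sq_abs, ← sq_abs (x i - xr i), ← mul_pow]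
  exact pow_le_pow_left₀ (abs_nonneg _) (abs_phi_le xr hf i x) 2

lemma sq_phi_sub_phi_mask_le_of_mem {i : Fin M} {A : Finset (Fin M)} (hi : i ∈ A)
    (x : EuclideanSpace ℝ (Fin M)) :
    (phi xr f i x - phi xr f i (mask xr A x)) ^ 2 ≤ 4 * Kf ^ 2 * (x i - xr i) ^ 2 := by
  have hphi_mask := abs_phi_le xr hf i (mask xr A x)
  simp only [mask_apply, hi, if_true] at hphi_mask
  have hcoord : |phi xr f i x - phi xr f i (mask xr A x)| ≤ 2 * (Kf * |x i - xr i|) := by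
    linarith [abs_sub (phi xr f i x) (phi xr f i (mask xr A x)), abs_phi_le xr hf i x]
  rw [← sq_abs]
  exact (pow_le_pow_left₀ (abs_nonneg _) hcoord 2).trans_eq (by rw [mul_pow, mul_pow, sq_abs]; ring)

lemma sq_phi_sub_phi_mask_le_sum_compl {i : Fin M} {A : Finset (Fin M)} (hi : i ∈ A)
    (x : EuclideanSpace ℝ (Fin M)) :
    (phi xr f i x - phi xr f i (mask xr A x)) ^ 2 ≤ 2 * Kf ^ 2 * ∑ j ∈ Aᶜ, (x j - xr j) ^ 2 := by
  set 𝒮 := (univ.erase i).powerset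
  set r : Finset (Fin M) → ℝ := fun S => ‖mask xr S x - mask xr (S ∩ A) x‖
  have hjensen : (𝔼 S ∈ 𝒮, r S) ^ 2 ≤ 𝔼 S ∈ 𝒮, r S ^ 2 := by
    have h := expect_mul_sq_le_sq_mul_sq 𝒮 r 1
    simp only [Pi.one_apply, mul_one, one_pow] at h
    rwa [expect_const (powerset_nonempty _), mul_one] at h
  calc (phi xr f i x - phi xr f i (mask xr A x)) ^ 2
      = |phi xr f i x - phi xr f i (mask xr A x)| ^ 2 := (sq_abs _).symm
    _ ≤ (2 * Kf * 𝔼 S ∈ 𝒮, r S) ^ 2 := by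
      gcongr
      exact abs_phi_sub_phi_mask_le xr hf hi x
    _ ≤ 4 * Kf ^ 2 * 𝔼 S ∈ 𝒮, r S ^ 2 := by
      rw [mul_pow, mul_pow]
      gcongr
      norm_num
    _ ≤ 4 * Kf ^ 2 * ((∑ j ∈ Aᶜ, (x j - xr j) ^ 2) / 2) := by
      gcongr
      exact expect_norm_mask_sub_mask_inter_sq_le xr x _ A
    _ = 2 * Kf ^ 2 * ∑ j ∈ Aᶜ, (x j - xr j) ^ 2 := by ring

lemma norm_Phi_sub_Phi_mask_le (hKf : 0 ≤ Kf) (x : EuclideanSpace ℝ (Fin M))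
    (A : Finset (Fin M)) :
    ‖Phi xr f x - Phi xr f (mask xr A x)‖ ≤ Real.sqrt M * (Kf * ‖x - xr‖) := by
  obtain rfl | hA := eq_or_ne A univ
  · rw [mask_univ, sub_self, norm_zero]
    positivity
  have hcard : #A + 1 ≤ M := by simpa using card_lt_card (ssubset_univ_iff.2 hA)
  set Q := ∑ j ∈ Aᶜ, (x j - xr j) ^ 2
  have hin : ∀ i ∈ A, (phi xr f i x - phi xr f i (mask xr A x)) ^ 2 ≤
      M * Kf ^ 2 * (x i - xr i) ^ 2 + Kf ^ 2 * Q := by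
    intro i hi
    have hM : (2 : ℝ) ≤ M := by
      have := card_pos.2 ⟨i, hi⟩
      exact_mod_cast (by omega : 2 ≤ M)
    have h4 := sq_phi_sub_phi_mask_le_of_mem xr hf hi x
    have h2 := sq_phi_sub_phi_mask_le_sum_compl xr hf hi x
    nlinarith [sq_nonneg Kf, sq_nonneg (x i - xr i)]
  have hout : ∀ i ∈ Aᶜ, (phi xr f i x - phi xr f i (mask xr A x)) ^ 2 ≤
      Kf ^ 2 * (x i - xr i) ^ 2 :=
    fun i hi => sq_phi_sub_phi_mask_le_of_notMem xr hf (mem_compl.1 hi) x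
  set P := ∑ j ∈ A, (x j - xr j) ^ 2
  have hnorm : ‖x - xr‖ ^ 2 = P + Q := by
    rw [EuclideanSpace.real_norm_sq_eq, ← sum_add_sum_compl A]
    rfl
  have hsq : ‖Phi xr f x - Phi xr f (mask xr A x)‖ ^ 2 ≤ M * Kf ^ 2 * ‖x - xr‖ ^ 2 :=
    calc ‖Phi xr f x - Phi xr f (mask xr A x)‖ ^ 2
        = ∑ i, (phi xr f i x - phi xr f i (mask xr A x)) ^ 2 := by
          rw [EuclideanSpace.real_norm_sq_eq]
          rfl
      _ = ∑ i ∈ A, (phi xr f i x - phi xr f i (mask xr A x)) ^ 2 +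
          ∑ i ∈ Aᶜ, (phi xr f i x - phi xr f i (mask xr A x)) ^ 2 :=
          (sum_add_sum_compl A _).symm
      _ ≤ ∑ i ∈ A, (M * Kf ^ 2 * (x i - xr i) ^ 2 + Kf ^ 2 * Q) +
          ∑ i ∈ Aᶜ, Kf ^ 2 * (x i - xr i) ^ 2 :=
          add_le_add (sum_le_sum hin) (sum_le_sum hout)
      _ = M * Kf ^ 2 * P + (#A + 1) * (Kf ^ 2 * Q) := by
          rw [sum_add_distrib, sum_const, nsmul_eq_mul, ← mul_sum, ← mul_sum]
          ring
      _ ≤ M * Kf ^ 2 * P + M * (Kf ^ 2 * Q) := by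
          gcongr
          exact_mod_cast hcard
      _ = M * Kf ^ 2 * ‖x - xr‖ ^ 2 := by rw [hnorm]; ring
  refine le_of_pow_le_pow_left₀ two_ne_zero (by positivity) (hsq.trans_eq ?_)
  rw [mul_pow, mul_pow, Real.sq_sqrt (Nat.cast_nonneg _)]
  ring

end Attribution

theorem explanation_error_bound_general {M d : ℕ}
    (f : EuclideanSpace ℝ (Fin M) → ℝ) (Kf : ℝ) (hKf : 0 ≤ Kf)
    (hf : ∀ u v : EuclideanSpace ℝ (Fin M), |f u - f v| ≤ Kf * ‖u - v‖)
    (g : EuclideanSpace ℝ (Fin M) → EuclideanSpace ℝ (Fin d))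
    (η : EuclideanSpace ℝ (Fin d) → EuclideanSpace ℝ (Fin M))
    (Kη : ℝ)
    (hη : ∀ u v : EuclideanSpace ℝ (Fin d), ‖η u - η v‖ ≤ Kη * ‖u - v‖)
    (xk : EuclideanSpace ℝ (Fin M)) (St : Finset (Fin M))
    (xtk : EuclideanSpace ℝ (Fin M)) (hxtk : xtk = mask (0 : EuclideanSpace ℝ (Fin M)) St xk)
    (ε : ℝ)
    (htrained : ‖Phi (0 : EuclideanSpace ℝ (Fin M)) f xtk - η (g xtk)‖ ≤ ε) :
    ‖Phi (0 : EuclideanSpace ℝ (Fin M)) f xk - η (g xk)‖ ≤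
      (1 + Real.sqrt 2 * (Kf * ‖xk‖)) * |f xk - f xtk| + Real.sqrt M * (Kf * ‖xk‖)
        + ε + Kη * ‖g xtk - g xk‖ := by
  have hmask := norm_Phi_sub_Phi_mask_le 0 hf hKf xk St
  rw [← hxtk, sub_zero] at hmask
  have hfterm : 0 ≤ (1 + Real.sqrt 2 * (Kf * ‖xk‖)) * |f xk - f xtk| := by positivity
  calc ‖Phi 0 f xk - η (g xk)‖
      = ‖(Phi 0 f xk - Phi 0 f xtk) + (Phi 0 f xtk - η (g xtk)) + (η (g xtk) - η (g xk))‖ := by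
        congr 1
        abel
    _ ≤ ‖Phi 0 f xk - Phi 0 f xtk‖ + ‖Phi 0 f xtk - η (g xtk)‖ + ‖η (g xtk) - η (g xk)‖ :=
        norm_add₃_le
    _ ≤ _ := by linarith [hη (g xtk) (g xk)]

/-- **Theorem 2 (Explanation Error Bound).** With reference vector `x_r = 0`, let
`Φ̂ = η ∘ g` be the estimated explanation with `η` being `K_η`-Lipschitz. If the
perturbed instance `x̃_k⁺ = m_{S̃}(x_k)` has nonnegative attributions and the encoder
is well-trained at `x̃_k⁺` (`‖Φ(x̃_k⁺) − Φ̂(x̃_k⁺)‖₂ ≤ ε`), then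
`‖Φ(x_k) − Φ̂(x_k)‖₂ ≤ (1 + √2·γ_k)·|f(x_k) − f(x̃_k⁺)| + √M·γ_k + ε + K_η‖g(x̃_k⁺) − g(x_k)‖₂`
where `γ_k = K_f‖x_k‖₂`. -/
theorem explanation_error_bound {M d : ℕ} (hM : 1 ≤ M)
    (f : EuclideanSpace ℝ (Fin M) → ℝ) (Kf : ℝ) (hKf : 0 ≤ Kf)
    (hf : ∀ u v : EuclideanSpace ℝ (Fin M), |f u - f v| ≤ Kf * ‖u - v‖)
    (g : EuclideanSpace ℝ (Fin M) → EuclideanSpace ℝ (Fin d))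
    (η : EuclideanSpace ℝ (Fin d) → EuclideanSpace ℝ (Fin M))
    (Kη : ℝ) (hKη : 0 ≤ Kη)
    (hη : ∀ u v : EuclideanSpace ℝ (Fin d), ‖η u - η v‖ ≤ Kη * ‖u - v‖)
    (xk : EuclideanSpace ℝ (Fin M)) (St : Finset (Fin M))
    (xtk : EuclideanSpace ℝ (Fin M)) (hxtk : xtk = mask (0 : EuclideanSpace ℝ (Fin M)) St xk)
    (hpos : ∀ i : Fin M, 0 ≤ phi (0 : EuclideanSpace ℝ (Fin M)) f i xtk)
    (ε : ℝ) (hε : 0 ≤ ε)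
    (htrained : ‖Phi (0 : EuclideanSpace ℝ (Fin M)) f xtk - η (g xtk)‖ ≤ ε) :
    ‖Phi (0 : EuclideanSpace ℝ (Fin M)) f xk - η (g xk)‖ ≤
      (1 + Real.sqrt 2 * (Kf * ‖xk‖)) * |f xk - f xtk| + Real.sqrt M * (Kf * ‖xk‖)
        + ε + Kη * ‖g xtk - g xk‖ :=
  explanation_error_bound_general f Kf hKf hf g η Kη hη xk St xtk hxtk ε htrained
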